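/- The implicit function Λ is differentiable on (1-α, 1) with Λ'(a) > 0 for all a ∈ (1-α, 1); in particular Λ is strictly increasing on (1-α, 1). -/

import Mathlib

/-- `F(λ,a) = λ log λ + (1-λ) log(1-λ) - λ log a - (1-λ) log(1-a)`, with `0 log 0 = 0`. -/
noncomputable def F (l a : ℝ) : ℝ :=
  l * Real.log l + (1 - l) * Real.log (1 - l) - l * Real.log a - (1 - l) * Real.log (1 - a)

/-!
For fixed `a`, `∂F/∂λ = logit λ - logit a < 0` on `(0, a)`, so `λ ↦ F λ a` is strictly
decreasing on `[0, a]` and `Λ a` is the only solution of `F λ a = -log α` near `(a, Λ a)`;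
also `Λ a > 0`, because `F 0 a = -log (1 - a) < -log α`. Hence `Λ` coincides near `a` with the
function given by the implicit function theorem, and implicit differentiation gives
`Λ' = -(∂F/∂a) / (∂F/∂λ)`, which is positive since `∂F/∂a = (1 - λ) / (1 - a) - λ / a > 0`
for `λ < a`.
-/

open Real Filter Set Topology

theorem HasStrictFDerivAt.hasDerivAt_of_eventually_unique {f : ℝ × ℝ → ℝ}
    {f' : ℝ × ℝ →L[ℝ] ℝ} {φ : ℝ → ℝ} {x₀ : ℝ}
    (hf : HasStrictFDerivAt f f' (x₀, φ x₀)) (hf₂ : f' (0, 1) ≠ 0)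
    (huniq : ∀ᶠ p in 𝓝 (x₀, φ x₀), f p = f (x₀, φ x₀) → φ p.1 = p.2) :
    HasDerivAt φ (-f' (1, 0) / f' (0, 1)) x₀ := by
  have hinv : (f' ∘L .inr ℝ ℝ ℝ).IsInvertible :=
    ⟨ContinuousLinearEquiv.unitsEquivAut ℝ (Units.mk0 _ hf₂), by ext; simp⟩
  set ψ := hf.implicitFunctionOfProdDomain hinv
  have hψ : ∀ᶠ x in 𝓝 x₀, f (x, ψ x) = f (x₀, φ x₀) ∧ φ x = ψ x := by
    have hgraph : Tendsto (fun x => (x, ψ x)) (𝓝 x₀) (𝓝 (x₀, φ x₀)) :=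
      tendsto_id.prodMk_nhds (hf.tendsto_implicitFunctionOfProdDomain hinv)
    filter_upwards [hgraph.eventually huniq, hf.eventually_apply_implicitFunctionOfProdDomain hinv]
      with x hx hsol
    exact ⟨hsol, hx hsol⟩
  obtain ⟨d, hd⟩ : ∃ d, HasDerivAt φ d x₀ :=
    ⟨_, ((hf.hasStrictFDerivAt_implicitFunctionOfProdDomain hinv).differentiableAt
      |>.congr_of_eventuallyEq (hψ.mono fun _ h => h.2)).hasDerivAt⟩
  -- differentiate `x ↦ f (x, φ x)`, which is locally constant
  have hd_eq : f' (1, 0) + d * f' (0, 1) = 0 := by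
    have hcomp := hf.hasFDerivAt.comp_hasDerivAt x₀ ((hasDerivAt_id x₀).prodMk hd)
    have hconst : HasDerivAt (fun x => f (x, φ x)) 0 x₀ :=
      (hasDerivAt_const x₀ _).congr_of_eventuallyEq (hψ.mono fun x h => h.2 ▸ h.1)
    have hsplit : ((1 : ℝ), d) = (1, 0) + d • (0, 1) := by simp
    have := hcomp.unique hconst
    rwa [hsplit, map_add, map_smul, smul_eq_mul] at this
  convert hd using 1
  field_simp
  linarith

theorem HasFDerivAt.apply_one_zero {f : ℝ × ℝ → ℝ} {f' : ℝ × ℝ →L[ℝ] ℝ} {x y d : ℝ}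
    (hf : HasFDerivAt f f' (x, y)) (hd : HasDerivAt (fun x => f (x, y)) d x) : f' (1, 0) = d :=
  (hf.comp_hasDerivAt x ((hasDerivAt_id x).prodMk (hasDerivAt_const x y))).unique hd

theorem HasFDerivAt.apply_zero_one {f : ℝ × ℝ → ℝ} {f' : ℝ × ℝ →L[ℝ] ℝ} {x y d : ℝ}
    (hf : HasFDerivAt f f' (x, y)) (hd : HasDerivAt (fun y => f (x, y)) d y) : f' (0, 1) = d :=
  (hf.comp_hasDerivAt y ((hasDerivAt_const y x).prodMk (hasDerivAt_id y))).unique hd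

theorem log_sub_log_one_sub_lt {l a : ℝ} (hl : 0 < l) (hla : l < a) (ha : a < 1) :
    log l - log (1 - l) < log a - log (1 - a) := by
  have := log_lt_log hl hla
  have := log_lt_log (by linarith : 0 < 1 - a) (by linarith : 1 - a < 1 - l)
  linarith

theorem continuous_F_left (a : ℝ) : Continuous (fun l => F l a) := by
  unfold F; fun_prop

theorem contDiffAt_F {l a : ℝ} (hl₀ : l ≠ 0) (hl₁ : l ≠ 1) (ha₀ : a ≠ 0) (ha₁ : a ≠ 1) :
    ContDiffAt ℝ 1 (fun p : ℝ × ℝ => F p.2 p.1) (a, l) := by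
  have : (1 : ℝ) - l ≠ 0 := sub_ne_zero.2 hl₁.symm
  have : (1 : ℝ) - a ≠ 0 := sub_ne_zero.2 ha₁.symm
  unfold F; fun_prop (disch := assumption)

theorem hasDerivAt_F_left (a : ℝ) {l : ℝ} (hl₀ : l ≠ 0) (hl₁ : l ≠ 1) :
    HasDerivAt (fun l => F l a) (log l - log (1 - l) - log a + log (1 - a)) l := by
  have hl₁' : 1 - l ≠ 0 := sub_ne_zero.2 hl₁.symm
  have h := (((hasDerivAt_mul_log hl₀).add ((hasDerivAt_mul_log hl₁').comp l
    ((hasDerivAt_id l).const_sub 1))).sub ((hasDerivAt_id l).mul_const (log a))).sub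
    (((hasDerivAt_id l).const_sub 1).mul_const (log (1 - a)))
  exact h.congr_deriv (by ring)

theorem hasDerivAt_F_right (l : ℝ) {a : ℝ} (ha₀ : a ≠ 0) (ha₁ : a ≠ 1) :
    HasDerivAt (fun a => F l a) ((1 - l) / (1 - a) - l / a) a := by
  have ha₁' : 1 - a ≠ 0 := sub_ne_zero.2 ha₁.symm
  have h := (((hasDerivAt_log ha₀).const_mul l).const_sub (l * log l + (1 - l) * log (1 - l))).sub
    (((hasDerivAt_log ha₁').comp a ((hasDerivAt_id a).const_sub 1)).const_mul (1 - l))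
  exact h.congr_deriv (by field_simp; ring)

theorem F_strictAntiOn_left {a : ℝ} (ha : a < 1) : StrictAntiOn (fun l => F l a) (Icc 0 a) := by
  refine strictAntiOn_of_deriv_neg (convex_Icc 0 a) (continuous_F_left a).continuousOn ?_
  rintro l hl
  obtain ⟨hl₀, hla⟩ : 0 < l ∧ l < a := by rwa [interior_Icc] at hl
  rw [(hasDerivAt_F_left a hl₀.ne' (hla.trans ha).ne).deriv]
  linarith [log_sub_log_one_sub_lt hl₀ hla ha]

theorem F_zero_left (a : ℝ) : F 0 a = -log (1 - a) := by simp [F]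

theorem exists_pos_hasDerivAt_of_F_eq {α : ℝ} {Λ : ℝ → ℝ}
    (hΛ : ∀ a ∈ Ioo (1 - α) 1, Λ a ∈ Ico 0 a ∧ F (Λ a) a = -log α) {a : ℝ}
    (ha : a ∈ Ioo (1 - α) 1) : ∃ d, 0 < d ∧ HasDerivAt Λ d a := by
  obtain ⟨⟨hl₀, hla⟩, hFa⟩ := hΛ a ha
  have ha₀ : 0 < a := hl₀.trans_lt hla
  have ha₁ : a < 1 := ha.2
  have hl_pos : 0 < Λ a := by
    refine hl₀.lt_of_ne fun h => ?_
    rw [← h, F_zero_left] at hFa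
    linarith [log_lt_log (by linarith : 0 < 1 - a) (by linarith [ha.1] : 1 - a < α)]
  have huniq : ∀ᶠ p in 𝓝 (a, Λ a), F p.2 p.1 = F (Λ a) a → Λ p.1 = p.2 := by
    filter_upwards [continuousAt_fst.eventually_mem (isOpen_Ioo.mem_nhds ha),
      continuousAt_const.eventually_lt continuousAt_snd hl_pos,
      continuousAt_snd.eventually_lt continuousAt_fst hla] with p hp hp₀ hp₁ hFp
    obtain ⟨⟨hΛp₀, hΛp₁⟩, hFΛp⟩ := hΛ p.1 hp
    exact (F_strictAntiOn_left hp.2).injOn ⟨hΛp₀, hΛp₁.le⟩ ⟨hp₀.le, hp₁.le⟩ (by rw [hFΛp, hFp, hFa])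
  have hf :=
    (contDiffAt_F hl_pos.ne' (hla.trans ha₁).ne ha₀.ne' ha₁.ne).hasStrictFDerivAt one_ne_zero
  have hf₁ := hf.hasFDerivAt.apply_one_zero (hasDerivAt_F_right (Λ a) ha₀.ne' ha₁.ne)
  have hf₂ := hf.hasFDerivAt.apply_zero_one (hasDerivAt_F_left a hl_pos.ne' (hla.trans ha₁).ne)
  have hf₂_neg : fderiv ℝ (fun p : ℝ × ℝ => F p.2 p.1) (a, Λ a) (0, 1) < 0 := by
    rw [hf₂]; linarith [log_sub_log_one_sub_lt hl_pos hla ha₁]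
  have hf₁_pos : 0 < fderiv ℝ (fun p : ℝ × ℝ => F p.2 p.1) (a, Λ a) (1, 0) := by
    rw [hf₁, sub_pos]
    exact ((div_lt_one ha₀).2 hla).trans ((one_lt_div (by linarith)).2 (by linarith))
  exact ⟨_, div_pos_of_neg_of_neg (neg_neg_of_pos hf₁_pos) hf₂_neg,
    hf.hasDerivAt_of_eventually_unique hf₂_neg.ne huniq⟩

theorem lambda_differentiable_deriv_pos_general (α : ℝ)
    (Λ : ℝ → ℝ)
    (hΛ : ∀ a ∈ Set.Ioo (1 - α) 1, Λ a ∈ Set.Ico 0 a ∧ F (Λ a) a = -Real.log α) :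
    (∀ a ∈ Set.Ioo (1 - α) 1, DifferentiableAt ℝ Λ a ∧ 0 < deriv Λ a) ∧
    StrictMonoOn Λ (Set.Ioo (1 - α) 1) := by
  have hderiv : ∀ a ∈ Ioo (1 - α) 1, DifferentiableAt ℝ Λ a ∧ 0 < deriv Λ a := fun a ha => by
    obtain ⟨d, hd, hΛd⟩ := exists_pos_hasDerivAt_of_F_eq hΛ ha
    exact ⟨hΛd.differentiableAt, hΛd.deriv ▸ hd⟩
  refine ⟨hderiv, strictMonoOn_of_deriv_pos (convex_Ioo _ _) ?_ ?_⟩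
  · exact fun a ha => (hderiv a ha).1.continuousAt.continuousWithinAt
  · rw [interior_Ioo]
    exact fun a ha => (hderiv a ha).2

/-- The implicit function `Λ` (where `Λ(a)` is the unique `λ ∈ [0,a)` with
`F(λ,a) = -log α`) is differentiable on `(1-α,1)` with `Λ'(a) > 0` for all
`a ∈ (1-α,1)`; in particular `Λ` is strictly increasing on `(1-α,1)`. -/
theorem lambda_differentiable_deriv_pos (α : ℝ) (hα : α ∈ Set.Ioo (0 : ℝ) 1)
    (Λ : ℝ → ℝ)
    (hΛ : ∀ a ∈ Set.Ioo (1 - α) 1, Λ a ∈ Set.Ico 0 a ∧ F (Λ a) a = -Real.log α) :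
    (∀ a ∈ Set.Ioo (1 - α) 1, DifferentiableAt ℝ Λ a ∧ 0 < deriv Λ a) ∧
    StrictMonoOn Λ (Set.Ioo (1 - α) 1) :=
  lambda_differentiable_deriv_pos_general α Λ hΛ
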